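/- Let R = ℤ[q^{±1/2}] be the ring of Laurent polynomials over ℤ in the invertible variable q^{1/2}, and set q = (q^{1/2})². Let A = O_{q²}(SL₂) be the R-algebra presented by generators a, b, c, d subject to the relations ba = q²ab, ca = q²ac, db = q²bd, dc = q²cd, bc = cb, ad − q⁻²bc = 1, da − q²bc = 1. Let C ⊆ A be the R-submodule spanned by all commutators xy − yx with x, y ∈ A. Then (q² − 1)·(ab) ∈ C, while ab ∉ C. Equivalently, the image τ(ab) of ab in HH₀(O_{q²}(SL₂)) = A/C is a nonzero element annihilated by q² − 1, so the ℤ[q^{±1/2}]-module HH₀(O_{q²}(SL₂)) has nontrivial torsion. -/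

import Mathlib

open LaurentPolynomial

/-- The ground ring `ℤ[q^{±1/2}]`: Laurent polynomials over `ℤ` in the invertible
variable `q^{1/2}`, so that `q = T 2`, `q² = T 4`, `q⁻² = T (-4)`. -/
abbrev SkeinRing : Type := LaurentPolynomial ℤ

/-- Generators `a, b, c, d` of the free algebra, indexed by `Fin 4`. -/
noncomputable def sl2gen (i : Fin 4) : FreeAlgebra SkeinRing (Fin 4) :=
  FreeAlgebra.ι SkeinRing i

/-- The defining relations of `O_{q²}(SL₂)`:
`ba = q²ab`, `ca = q²ac`, `db = q²bd`, `dc = q²cd`, `bc = cb`,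
`ad − q⁻²bc = 1`, `da − q²bc = 1`, where `a,b,c,d` are the generators
indexed by `0,1,2,3` and `q² = T 4`, `q⁻² = T (-4)`. -/
inductive SL2Rel : FreeAlgebra SkeinRing (Fin 4) → FreeAlgebra SkeinRing (Fin 4) → Prop
  | ba : SL2Rel (sl2gen 1 * sl2gen 0) ((T 4 : SkeinRing) • (sl2gen 0 * sl2gen 1))
  | ca : SL2Rel (sl2gen 2 * sl2gen 0) ((T 4 : SkeinRing) • (sl2gen 0 * sl2gen 2))
  | db : SL2Rel (sl2gen 3 * sl2gen 1) ((T 4 : SkeinRing) • (sl2gen 1 * sl2gen 3))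
  | dc : SL2Rel (sl2gen 3 * sl2gen 2) ((T 4 : SkeinRing) • (sl2gen 2 * sl2gen 3))
  | bc : SL2Rel (sl2gen 1 * sl2gen 2) (sl2gen 2 * sl2gen 1)
  | ad : SL2Rel (sl2gen 0 * sl2gen 3 - (T (-4) : SkeinRing) • (sl2gen 1 * sl2gen 2)) 1
  | da : SL2Rel (sl2gen 3 * sl2gen 0 - (T 4 : SkeinRing) • (sl2gen 1 * sl2gen 2)) 1

/-- The quantized coordinate algebra `O_{q²}(SL₂)` over `ℤ[q^{±1/2}]`. -/
noncomputable def OqSL2 : Type := RingQuot SL2Rel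

noncomputable instance : Ring OqSL2 := by unfold OqSL2; infer_instance
noncomputable instance : Algebra SkeinRing OqSL2 := by unfold OqSL2; infer_instance

/-- The images of the generators `a, b, c, d` in `O_{q²}(SL₂)`. -/
noncomputable def oq (i : Fin 4) : OqSL2 :=
  RingQuot.mkAlgHom SkeinRing SL2Rel (sl2gen i)


theorem span_commutators_le_ker {R A B : Type*} [CommSemiring R] [Ring A] [CommRing B]
    [Algebra R A] [Algebra R B] (f : A →ₐ[R] B) :
    Submodule.span R {z : A | ∃ x y : A, z = x * y - y * x} ≤ LinearMap.ker f.toLinearMap :=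
  Submodule.span_le.mpr fun _ ⟨x, y, hz⟩ => by
    simp [hz, LinearMap.mem_ker, mul_comm]

theorem smul_sub_one_mul_eq_commutator {R A : Type*} [CommRing R] [Ring A] [Algebra R A]
    {r : R} {x y : A} (h : y * x = r • (x * y)) : (r - 1) • (x * y) = y * x - x * y := by
  rw [sub_smul, one_smul, h]

theorem oq_one_mul_oq_zero : oq 1 * oq 0 = (T 4 : SkeinRing) • (oq 0 * oq 1) := by
  have h := RingQuot.mkAlgHom_rel SkeinRing SL2Rel.ba
  rwa [map_mul, map_smul, map_mul] at h

namespace OqSL2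

/-- The augmentation `q^{1/2} ↦ 1` of `ℤ[q^{±1/2}]`. -/
noncomputable def counit : SkeinRing →ₐ[ℤ] ℤ :=
  AddMonoidAlgebra.lift ℤ ℤ ℤ 1

noncomputable abbrev counitAlgebra : Algebra SkeinRing ℤ := counit.toRingHom.toAlgebra

attribute [local instance] counitAlgebra

theorem algebraMap_T (n : ℤ) : algebraMap SkeinRing ℤ (T n) = 1 := by
  change counit (T n) = 1
  rw [counit, T, AddMonoidAlgebra.lift_single]
  simp

/-- At `q = 1` the relations are those of the commutative algebra `ℤ[SL₂]`, and the point
`(a, b, c, d) = (1, 1, 0, 1)` of `SL₂(ℤ)` gives a character of `O_{q²}(SL₂)`. -/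
noncomputable def character : OqSL2 →ₐ[SkeinRing] ℤ :=
  RingQuot.liftAlgHom SkeinRing ⟨FreeAlgebra.lift SkeinRing ![1, 1, 0, 1], fun _ _ h => by
    induction h <;>
      simp [sl2gen, Algebra.smul_def, algebraMap_T]⟩

theorem character_oq (i : Fin 4) : character (oq i) = ![1, 1, 0, 1] i :=
  (RingQuot.liftAlgHom_mkAlgHom_apply _ _ _ _).trans (FreeAlgebra.lift_ι_apply _ _)

theorem oq_zero_mul_oq_one_notMem_span_commutators :
    oq 0 * oq 1 ∉ Submodule.span SkeinRing {z : OqSL2 | ∃ x y : OqSL2, z = x * y - y * x} :=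
  fun hmem => by
    simpa [character_oq] using span_commutators_le_ker character hmem

end OqSL2

theorem HH0_OqSL2_torsion
    (C : Submodule SkeinRing OqSL2)
    (hC : C = Submodule.span SkeinRing {z : OqSL2 | ∃ x y : OqSL2, z = x * y - y * x}) :
    ((T 4 - 1 : SkeinRing) • (oq 0 * oq 1) ∈ C) ∧ (oq 0 * oq 1 ∉ C) := by
  subst hC
  constructor
  · rw [smul_sub_one_mul_eq_commutator oq_one_mul_oq_zero]
    exact Submodule.subset_span ⟨oq 1, oq 0, rfl⟩
  · exact OqSL2.oq_zero_mul_oq_one_notMem_span_commutators
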